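/- Let φ be a tight inclusion of a persistence module M into a persistence module N over J, and let a < t < b be elements of J. Then φ_t(W^M_t(a,b)) = W^N_t(a,b) ∩ φ_t(V^M_t(a,b)). -/

import Mathlib

/-!
Write `C_P := (ρ^P_{t,b})⁻¹(Im ρ^P_{a,b})`. Every persistence module satisfies
`W^P_t(a,b) = V^P_t(a,b) ∩ C_P`: given `x ∈ V` with `ρ_{t,b} x = ρ_{a,b} v`, the splitting
`x = ρ_{a,t} v + (x - ρ_{a,t} v)` writes `x` as a sum of elements of the two summands of `W`.
Tightness of `φ` says exactly that `C_M = φ_t⁻¹(C_N)`, hence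
`φ_t(W^M) = φ_t(V^M ∩ φ_t⁻¹ C_N) = φ_t(V^M) ∩ C_N`, and this equals
`φ_t(V^M) ∩ V^N ∩ C_N = φ_t(V^M) ∩ W^N` because `φ_t(V^M) ⊆ V^N`.
-/

/-- A persistence module over a set `J ⊆ ℝ` of scales: a family of `F`-vector spaces
together with commuting linear bonding maps. -/
structure PersistenceModule (F : Type*) [Field F] (J : Set ℝ) where
  space : J → Type*
  [addCommGroup : ∀ r : J, AddCommGroup (space r)]
  [module : ∀ r : J, Module F (space r)]
  bond : ∀ r r' : J, (r : ℝ) ≤ (r' : ℝ) → (space r →ₗ[F] space r')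
  bond_refl : ∀ r : J, bond r r le_rfl = LinearMap.id
  bond_comp : ∀ (r r' r'' : J) (h : (r : ℝ) ≤ (r' : ℝ)) (h' : (r' : ℝ) ≤ (r'' : ℝ)),
    (bond r' r'' h').comp (bond r r' h) = bond r r'' (h.trans h')

attribute [instance] PersistenceModule.addCommGroup PersistenceModule.module

/-- An inclusion of persistence modules: a family of injective linear maps commuting
with the bonding maps. -/
structure PersistenceModule.Inclusion {F : Type*} [Field F] {J : Set ℝ}
    (M N : PersistenceModule F J) where
  toFun : ∀ r : J, M.space r →ₗ[F] N.space r
  injective : ∀ r : J, Function.Injective (toFun r)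
  comm : ∀ (r r' : J) (h : (r : ℝ) ≤ (r' : ℝ)),
    (toFun r').comp (M.bond r r' h) = (N.bond r r' h).comp (toFun r)

/-- An inclusion `φ` of persistence modules is *tight* if for all `r' < r` in `J`,
`φ_r(Im ρ^M_{r',r}) = (range φ_r) ∩ Im ρ^N_{r',r}`. -/
def PersistenceModule.Inclusion.Tight {F : Type*} [Field F] {J : Set ℝ}
    {M N : PersistenceModule F J} (φ : M.Inclusion N) : Prop :=
  ∀ (r' r : J) (h : (r' : ℝ) < (r : ℝ)),
    (LinearMap.range (M.bond r' r h.le)).map (φ.toFun r) =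
      LinearMap.range (φ.toFun r) ⊓ LinearMap.range (N.bond r' r h.le)

/-- `V^P_t(a,b) = ⋂_{s ∈ J, a < s < t} Im ρ^P_{s,t} ∩ ⋂_{s ∈ J, s > b} ker ρ^P_{t,s}`. -/
noncomputable def PersistenceModule.V {F : Type*} [Field F] {J : Set ℝ}
    (P : PersistenceModule F J) (a t b : J) (htb : (t : ℝ) < (b : ℝ)) :
    Submodule F (P.space t) :=
  (⨅ s : J, ⨅ h : (a : ℝ) < (s : ℝ) ∧ (s : ℝ) < (t : ℝ),
      LinearMap.range (P.bond s t h.2.le)) ⊓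
  (⨅ s : J, ⨅ h : (b : ℝ) < (s : ℝ),
      LinearMap.ker (P.bond t s (htb.trans h).le))

/-- `W^P_t(a,b) = (Im ρ^P_{a,t} ∩ ⋂_{s ∈ J, s > b} ker ρ^P_{t,s})
      + (⋂_{s ∈ J, a < s < t} Im ρ^P_{s,t} ∩ ker ρ^P_{t,b})`. -/
noncomputable def PersistenceModule.W {F : Type*} [Field F] {J : Set ℝ}
    (P : PersistenceModule F J) (a t b : J)
    (hat : (a : ℝ) < (t : ℝ)) (htb : (t : ℝ) < (b : ℝ)) :
    Submodule F (P.space t) :=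
  (LinearMap.range (P.bond a t hat.le) ⊓
    (⨅ s : J, ⨅ h : (b : ℝ) < (s : ℝ),
      LinearMap.ker (P.bond t s (htb.trans h).le))) ⊔
  ((⨅ s : J, ⨅ h : (a : ℝ) < (s : ℝ) ∧ (s : ℝ) < (t : ℝ),
      LinearMap.range (P.bond s t h.2.le)) ⊓
    LinearMap.ker (P.bond t b htb.le))

open LinearMap (range ker)

namespace PersistenceModule

variable {F : Type*} [Field F] {J : Set ℝ}

section

variable (P : PersistenceModule F J)

def iInfRangeBond (a t : J) : Submodule F (P.space t) :=
  ⨅ s : J, ⨅ h : (a : ℝ) < (s : ℝ) ∧ (s : ℝ) < (t : ℝ), range (P.bond s t h.2.le)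

def iInfKerBond (t b : J) (htb : (t : ℝ) < (b : ℝ)) : Submodule F (P.space t) :=
  ⨅ s : J, ⨅ h : (b : ℝ) < (s : ℝ), ker (P.bond t s (htb.trans h).le)

theorem V_eq (a t b : J) (htb : (t : ℝ) < (b : ℝ)) :
    P.V a t b htb = P.iInfRangeBond a t ⊓ P.iInfKerBond t b htb :=
  rfl

theorem W_eq (a t b : J) (hat : (a : ℝ) < (t : ℝ)) (htb : (t : ℝ) < (b : ℝ)) :
    P.W a t b hat htb = (range (P.bond a t hat.le) ⊓ P.iInfKerBond t b htb) ⊔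
      (P.iInfRangeBond a t ⊓ ker (P.bond t b htb.le)) :=
  rfl

theorem bond_bond {r r' r'' : J} (h : (r : ℝ) ≤ r') (h' : (r' : ℝ) ≤ r'') (x : P.space r) :
    P.bond r' r'' h' (P.bond r r' h x) = P.bond r r'' (h.trans h') x :=
  LinearMap.congr_fun (P.bond_comp r r' r'' h h') x

theorem range_bond_le_range_bond {r s t : J} (hrs : (r : ℝ) ≤ s) (hst : (s : ℝ) ≤ t) :
    range (P.bond r t (hrs.trans hst)) ≤ range (P.bond s t hst) := by
  rintro _ ⟨x, rfl⟩
  exact ⟨P.bond r s hrs x, P.bond_bond hrs hst x⟩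

theorem ker_bond_le_ker_bond {t b s : J} (htb : (t : ℝ) ≤ b) (hbs : (b : ℝ) ≤ s) :
    ker (P.bond t b htb) ≤ ker (P.bond t s (htb.trans hbs)) := by
  intro x hx
  rw [LinearMap.mem_ker, ← P.bond_bond htb hbs, LinearMap.mem_ker.mp hx, map_zero]

theorem range_bond_le_iInfRangeBond {a t : J} (hat : (a : ℝ) < t) :
    range (P.bond a t hat.le) ≤ P.iInfRangeBond a t :=
  le_iInf₂ fun _ hs => P.range_bond_le_range_bond hs.1.le hs.2.le

theorem ker_bond_le_iInfKerBond {t b : J} (htb : (t : ℝ) < b) :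
    ker (P.bond t b htb.le) ≤ P.iInfKerBond t b htb :=
  le_iInf₂ fun _ hs => P.ker_bond_le_ker_bond htb.le hs.le

theorem W_eq_V_inf_comap_range_bond (a t b : J) (hat : (a : ℝ) < t) (htb : (t : ℝ) < b) :
    P.W a t b hat htb =
      P.V a t b htb ⊓ (range (P.bond a b (hat.trans htb).le)).comap (P.bond t b htb.le) := by
  rw [W_eq, V_eq]
  refine le_antisymm (sup_le (le_inf ?_ ?_) (le_inf ?_ ?_)) ?_
  · exact inf_le_inf_right _ (P.range_bond_le_iInfRangeBond hat)
  · rintro _ ⟨⟨v, rfl⟩, -⟩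
    exact ⟨v, (P.bond_bond hat.le htb.le v).symm⟩
  · exact inf_le_inf_left _ (P.ker_bond_le_iInfKerBond htb)
  · exact inf_le_right.trans (LinearMap.ker_le_comap _)
  rintro x ⟨⟨hx_range, hx_ker⟩, v, hv⟩
  have hker : x - P.bond a t hat.le v ∈ ker (P.bond t b htb.le) := by
    rw [LinearMap.mem_ker, map_sub, P.bond_bond, hv, sub_self]
  refine Submodule.mem_sup.mpr
    ⟨_, ⟨⟨v, rfl⟩, ?_⟩, _, ⟨?_, hker⟩, add_sub_cancel _ x⟩
  · rw [← sub_sub_cancel x (P.bond a t hat.le v)]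
    exact sub_mem hx_ker (P.ker_bond_le_iInfKerBond htb hker)
  · exact sub_mem hx_range (P.range_bond_le_iInfRangeBond hat ⟨v, rfl⟩)

end

namespace Inclusion

variable {M N : PersistenceModule F J} (φ : M.Inclusion N)

theorem apply_bond {r r' : J} (h : (r : ℝ) ≤ r') (x : M.space r) :
    φ.toFun r' (M.bond r r' h x) = N.bond r r' h (φ.toFun r x) :=
  LinearMap.congr_fun (φ.comm r r' h) x

theorem map_range_bond_le {r r' : J} (h : (r : ℝ) ≤ r') :
    (range (M.bond r r' h)).map (φ.toFun r') ≤ range (N.bond r r' h) := by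
  rintro _ ⟨_, ⟨x, rfl⟩, rfl⟩
  exact ⟨φ.toFun r x, (φ.apply_bond h x).symm⟩

theorem map_ker_bond_le {r r' : J} (h : (r : ℝ) ≤ r') :
    (ker (M.bond r r' h)).map (φ.toFun r) ≤ ker (N.bond r r' h) := by
  rintro _ ⟨x, hx, rfl⟩
  rw [LinearMap.mem_ker, ← φ.apply_bond, LinearMap.mem_ker.mp hx, map_zero]

theorem map_iInfRangeBond_le (a t : J) :
    (M.iInfRangeBond a t).map (φ.toFun t) ≤ N.iInfRangeBond a t :=
  le_iInf₂ fun s hs => (Submodule.map_mono (iInf₂_le s hs)).trans (φ.map_range_bond_le _)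

theorem map_iInfKerBond_le (t b : J) (htb : (t : ℝ) < b) :
    (M.iInfKerBond t b htb).map (φ.toFun t) ≤ N.iInfKerBond t b htb :=
  le_iInf₂ fun s hs => (Submodule.map_mono (iInf₂_le s hs)).trans (φ.map_ker_bond_le _)

theorem map_V_le (a t b : J) (htb : (t : ℝ) < b) :
    (M.V a t b htb).map (φ.toFun t) ≤ N.V a t b htb := by
  rw [V_eq, V_eq]
  exact (Submodule.map_inf_le _).trans
    (inf_le_inf (φ.map_iInfRangeBond_le a t) (φ.map_iInfKerBond_le t b htb))

variable {φ}

theorem Tight.range_bond_eq_comap (hφ : φ.Tight) {r' r : J} (h : (r' : ℝ) < r) :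
    range (M.bond r' r h.le) = (range (N.bond r' r h.le)).comap (φ.toFun r) := by
  have := congrArg (Submodule.comap (φ.toFun r)) (hφ r' r h)
  rwa [Submodule.comap_map_eq_of_injective (φ.injective r), Submodule.comap_inf,
    LinearMap.range_le_iff_comap.mp le_rfl, top_inf_eq] at this

theorem Tight.comap_range_bond_eq (hφ : φ.Tight) {a t b : J} (hab : (a : ℝ) < b)
    (htb : (t : ℝ) ≤ b) :
    (range (M.bond a b hab.le)).comap (M.bond t b htb) =
      ((range (N.bond a b hab.le)).comap (N.bond t b htb)).comap (φ.toFun t) := by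
  rw [hφ.range_bond_eq_comap hab, ← Submodule.comap_comp, φ.comm, Submodule.comap_comp]

end Inclusion

end PersistenceModule

/-- Let `φ` be a tight inclusion of a persistence module `M` into a
persistence module `N` over `J`, and let `a < t < b` be elements of `J`. Then
`φ_t(W^M_t(a,b)) = W^N_t(a,b) ∩ φ_t(V^M_t(a,b))`. -/
theorem map_W_eq_W_inf_map_V
    {F : Type*} [Field F] {J : Set ℝ} {M N : PersistenceModule F J}
    (φ : M.Inclusion N) (hφ : φ.Tight)
    (a t b : J) (hat : (a : ℝ) < (t : ℝ)) (htb : (t : ℝ) < (b : ℝ)) :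
    (M.W a t b hat htb).map (φ.toFun t) =
      N.W a t b hat htb ⊓ (M.V a t b htb).map (φ.toFun t) := by
  rw [M.W_eq_V_inf_comap_range_bond, N.W_eq_V_inf_comap_range_bond,
    hφ.comap_range_bond_eq (hat.trans htb), ← Submodule.map_inf_eq_map_inf_comap,
    inf_comm (N.V a t b htb), inf_assoc, inf_eq_right.mpr (φ.map_V_le a t b htb), inf_comm]
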